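/- Optimality condition for the log-det regularized SDP: Θ* minimizes Tr(LΘ) - (1/η) log det Θ over symmetric positive definite matrices Θ with Tr(Θ) = 1 if and only if Θ* = (1/η)(L + cI)^{-1} for the unique scalar c such that L + cI is positive definite and Tr((L + cI)^{-1}) = η. -/

import Mathlib

/-!
Write `A = L + cI` and `P = ηA`, where `c` is chosen so that `A ≻ 0` and `Tr A⁻¹ = η`; such a `c`
exists and is unique because `c ↦ Tr (L + cI)⁻¹ = ∑ᵢ (λᵢ + c)⁻¹` decreases strictly from `∞` to
`0` on `(-λ_min, ∞)`. On the feasible set `Tr (LΘ) = η⁻¹ Tr (PΘ) - c`, so up to a constant the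
objective is `η⁻¹ (Tr (PΘ) - log det (PΘ))`. With `R = P^{1/2}`, `PΘ` has the trace and
determinant of the positive definite `S = RΘR`, and `Tr S - log det S - n = ∑ᵢ (sᵢ - 1 - log sᵢ)`
over the eigenvalues of `S` is nonnegative, vanishing only for `S = I`, i.e. `Θ = P⁻¹ = η⁻¹ A⁻¹`.
-/

open Matrix

section SumInvAdd

variable {ι : Type*} [Fintype ι] [Nonempty ι] (μ : ι → ℝ)

lemma sum_inv_add_lt_sum_inv_add {c c' : ℝ} (hc : ∀ i, 0 < μ i + c) (hcc' : c < c') :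
    ∑ i, (μ i + c')⁻¹ < ∑ i, (μ i + c)⁻¹ :=
  Finset.sum_lt_sum_of_nonempty Finset.univ_nonempty fun i _ =>
    inv_strictAnti₀ (hc i) (by linarith)

lemma exists_sum_inv_add_eq {η : ℝ} (hη : 0 < η) :
    ∃ c, (∀ i, 0 < μ i + c) ∧ ∑ i, (μ i + c)⁻¹ = η := by
  obtain ⟨i₀, hi₀⟩ := Finite.exists_min μ
  have hcard : (1 : ℝ) ≤ Fintype.card ι := by exact_mod_cast Fintype.card_pos
  -- IVT on `[a, b]`: at `a` the smallest term alone is `η`, at `b` every term is `≤ η / card ι`.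
  set a := η⁻¹ - μ i₀
  set b := Fintype.card ι / η - μ i₀
  have hab : a ≤ b := by
    simp only [a, b, sub_le_sub_iff_right, div_eq_mul_inv]
    exact le_mul_of_one_le_left (inv_pos.mpr hη).le hcard
  have hpos : ∀ c, a ≤ c → ∀ i, 0 < μ i + c := fun c hc i => by
    simp only [a] at hc
    linarith [hi₀ i, inv_pos.mpr hη]
  have hcont : ContinuousOn (fun c => ∑ i, (μ i + c)⁻¹) (Set.Icc a b) :=
    continuousOn_finsetSum _ fun i _ =>
      (continuousOn_const.add continuousOn_id).inv₀ fun c hc => (hpos c hc.1 i).ne'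
  have hga : η ≤ ∑ i, (μ i + a)⁻¹ :=
    calc η = (μ i₀ + a)⁻¹ := by simp [a]
      _ ≤ ∑ i, (μ i + a)⁻¹ :=
        Finset.single_le_sum (fun i _ => (inv_pos.mpr (hpos a le_rfl i)).le) (Finset.mem_univ i₀)
  have hgb : ∑ i, (μ i + b)⁻¹ ≤ η :=
    calc ∑ i, (μ i + b)⁻¹ ≤ ∑ _i : ι, (Fintype.card ι / η)⁻¹ :=
          Finset.sum_le_sum fun i _ => inv_anti₀ (by positivity) (by linarith [hi₀ i])
      _ = η := by
          rw [Finset.sum_const, Finset.card_univ, nsmul_eq_mul, inv_div]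
          field_simp
  obtain ⟨c, hc, hgc⟩ := intermediate_value_Icc' hab hcont ⟨hgb, hga⟩
  exact ⟨c, hpos c hc.1, hgc⟩

lemma existsUnique_sum_inv_add_eq {η : ℝ} (hη : 0 < η) :
    ∃! c, (∀ i, 0 < μ i + c) ∧ ∑ i, (μ i + c)⁻¹ = η := by
  obtain ⟨c, hc, hsum⟩ := exists_sum_inv_add_eq μ hη
  refine ⟨c, ⟨hc, hsum⟩, fun c' ⟨hc', hsum'⟩ => le_antisymm ?_ ?_⟩ <;> by_contra! h
  · linarith [sum_inv_add_lt_sum_inv_add μ hc h]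
  · linarith [sum_inv_add_lt_sum_inv_add μ hc' h]

end SumInvAdd

namespace Matrix.IsHermitian

lemma eq_one_of_eigenvalues_eq_one {𝕜 n : Type*} [RCLike 𝕜] [Fintype n] [DecidableEq n]
    {A : Matrix n n 𝕜} (hA : A.IsHermitian) (h : ∀ i, hA.eigenvalues i = 1) : A = 1 := by
  have hspec : (spectrum ℝ A).EqOn (fun x => x) (fun _ => 1) := by
    rw [hA.spectrum_real_eq_range_eigenvalues]
    rintro _ ⟨i, rfl⟩
    exact h i
  rw [← cfc_id' ℝ A, cfc_congr hspec, cfc_const_one ℝ A]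

lemma trace_cfc {𝕜 n : Type*} [RCLike 𝕜] [Fintype n] [DecidableEq n] {A : Matrix n n 𝕜}
    (hA : A.IsHermitian) (f : ℝ → ℝ) : (cfc f A).trace = ∑ i, (f (hA.eigenvalues i) : 𝕜) := by
  rw [hA.cfc_eq, IsHermitian.cfc, Unitary.conjStarAlgAut_apply, trace_mul_cycle,
    Unitary.coe_star_mul_self, one_mul, trace_diagonal]
  rfl

variable {n : Type*} [Fintype n] [DecidableEq n] {A : Matrix n n ℝ}

lemma cfc_add_const_eq (hA : A.IsHermitian) (c : ℝ) : cfc (· + c) A = A + c • 1 := by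
  rw [cfc_add_const c (fun x => x) A, cfc_id' ℝ A, Algebra.algebraMap_eq_smul_one]

open scoped MatrixOrder in
lemma posDef_add_smul_one_iff (hA : A.IsHermitian) (c : ℝ) :
    (A + c • 1).PosDef ↔ ∀ i, 0 < hA.eigenvalues i + c := by
  rw [← isStrictlyPositive_iff_posDef, ← hA.cfc_add_const_eq, cfc_isStrictlyPositive_iff _ A,
    hA.spectrum_real_eq_range_eigenvalues, Set.forall_mem_range]

lemma inv_add_smul_one_eq_cfc (hA : A.IsHermitian) {c : ℝ}
    (hc : ∀ i, hA.eigenvalues i + c ≠ 0) : (A + c • 1)⁻¹ = cfc (fun x => (x + c)⁻¹) A := by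
  rw [cfc_inv (fun x => x + c) A, hA.cfc_add_const_eq, nonsing_inv_eq_ringInverse]
  rw [hA.spectrum_real_eq_range_eigenvalues, Set.forall_mem_range]
  exact hc

lemma trace_inv_add_smul_one (hA : A.IsHermitian) {c : ℝ} (hc : ∀ i, hA.eigenvalues i + c ≠ 0) :
    ((A + c • 1)⁻¹).trace = ∑ i, (hA.eigenvalues i + c)⁻¹ := by
  rw [hA.inv_add_smul_one_eq_cfc hc, hA.trace_cfc]
  rfl

lemma existsUnique_posDef_add_smul_one_trace_inv_eq [Nonempty n] (hA : A.IsHermitian) {η : ℝ}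
    (hη : 0 < η) : ∃! c : ℝ, (A + c • 1).PosDef ∧ ((A + c • 1)⁻¹).trace = η := by
  have hiff : ∀ c : ℝ, ((A + c • 1).PosDef ∧ ((A + c • 1)⁻¹).trace = η) ↔
      ((∀ i, 0 < hA.eigenvalues i + c) ∧ ∑ i, (hA.eigenvalues i + c)⁻¹ = η) := fun c => by
    rw [hA.posDef_add_smul_one_iff]
    exact and_congr_right fun hc => by rw [hA.trace_inv_add_smul_one fun i => (hc i).ne']
  exact (existsUnique_congr hiff).mpr (existsUnique_sum_inv_add_eq hA.eigenvalues hη)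

end Matrix.IsHermitian

namespace Matrix.PosDef

variable {n : Type*} [Fintype n] [DecidableEq n] {S P Θ : Matrix n n ℝ}

lemma trace_sub_card_sub_log_det (hS : S.PosDef) :
    S.trace - Fintype.card n - Real.log S.det =
      ∑ i, (hS.1.eigenvalues i - 1 - Real.log (hS.1.eigenvalues i)) := by
  simp only [hS.1.trace_eq_sum_eigenvalues, hS.1.det_eq_prod_eigenvalues,
    RCLike.ofReal_real_eq_id, id_eq]
  rw [Real.log_prod fun i _ => (hS.eigenvalues_pos i).ne', Finset.sum_sub_distrib,
    Finset.sum_sub_distrib]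
  simp

lemma log_det_le_trace_sub_card (hS : S.PosDef) : Real.log S.det ≤ S.trace - Fintype.card n := by
  have hsum := hS.trace_sub_card_sub_log_det
  have : 0 ≤ ∑ i, (hS.1.eigenvalues i - 1 - Real.log (hS.1.eigenvalues i)) :=
    Finset.sum_nonneg fun i _ => by linarith [Real.log_le_sub_one_of_pos (hS.eigenvalues_pos i)]
  linarith

lemma eq_one_of_log_det_eq_trace_sub_card (hS : S.PosDef)
    (h : Real.log S.det = S.trace - Fintype.card n) : S = 1 := by
  have hsum := hS.trace_sub_card_sub_log_det
  rw [h, sub_self, eq_comm, Finset.sum_eq_zero_iff_of_nonneg fun i _ => by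
    linarith [Real.log_le_sub_one_of_pos (hS.eigenvalues_pos i)]] at hsum
  refine hS.1.eq_one_of_eigenvalues_eq_one fun i => by_contra fun hi => ?_
  linarith [hsum i (Finset.mem_univ i), Real.log_lt_sub_one_of_pos (hS.eigenvalues_pos i) hi]

open scoped MatrixOrder

lemma posDef_sqrt_mul_mul_sqrt (hP : P.PosDef) (hΘ : Θ.PosDef) :
    (CFC.sqrt P * Θ * CFC.sqrt P).PosDef :=
  (IsStrictlyPositive.conjugate_of_isUnit_of_isSelfAdjoint Θ _
    (hP.isStrictlyPositive.sqrt).isUnit (CFC.sqrt_nonneg P).isSelfAdjoint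
    hΘ.isStrictlyPositive).posDef

lemma trace_sqrt_mul_mul_sqrt (hP : P.PosSemidef) :
    (CFC.sqrt P * Θ * CFC.sqrt P).trace = (P * Θ).trace := by
  rw [trace_mul_cycle, CFC.sqrt_mul_sqrt_self P hP.nonneg]

lemma det_sqrt_mul_mul_sqrt (hP : P.PosSemidef) :
    (CFC.sqrt P * Θ * CFC.sqrt P).det = (P * Θ).det := by
  rw [det_mul_comm, ← mul_assoc, CFC.sqrt_mul_sqrt_self P hP.nonneg]

lemma log_det_mul_le_trace_mul_sub_card (hP : P.PosDef) (hΘ : Θ.PosDef) :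
    Real.log (P * Θ).det ≤ (P * Θ).trace - Fintype.card n := by
  simpa only [trace_sqrt_mul_mul_sqrt hP.posSemidef, det_sqrt_mul_mul_sqrt hP.posSemidef] using
    (posDef_sqrt_mul_mul_sqrt hP hΘ).log_det_le_trace_sub_card

lemma mul_eq_one_of_log_det_mul_eq (hP : P.PosDef) (hΘ : Θ.PosDef)
    (h : Real.log (P * Θ).det = (P * Θ).trace - Fintype.card n) : P * Θ = 1 := by
  have hS := (posDef_sqrt_mul_mul_sqrt hP hΘ).eq_one_of_log_det_eq_trace_sub_card (by
    rwa [trace_sqrt_mul_mul_sqrt hP.posSemidef, det_sqrt_mul_mul_sqrt hP.posSemidef])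
  rw [mul_assoc, mul_eq_one_comm, mul_assoc, CFC.sqrt_mul_sqrt_self P hP.posSemidef.nonneg] at hS
  exact mul_eq_one_comm.mp hS

end Matrix.PosDef

section LogdetObjective

variable {n : Type*} [Fintype n] [DecidableEq n] {L A Θ : Matrix n n ℝ} {η c : ℝ}

noncomputable def logdetObjective (L : Matrix n n ℝ) (η : ℝ) (Θ : Matrix n n ℝ) : ℝ :=
  (L * Θ).trace - (1 / η) * Real.log Θ.det

lemma smul_mul_one_div_smul_inv (hη : η ≠ 0) (hA : IsUnit A.det) :
    η • A * ((1 / η) • A⁻¹) = 1 := by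
  rw [smul_mul_smul_comm, mul_one_div_cancel hη, one_smul, mul_nonsing_inv _ hA]

lemma trace_one_div_smul_inv (hη : η ≠ 0) (htr : (A⁻¹).trace = η) :
    ((1 / η) • A⁻¹).trace = 1 := by
  rw [trace_smul, htr, smul_eq_mul, one_div_mul_cancel hη]

lemma logdetObjective_eq (hη : η ≠ 0) (hA : (L + c • 1).PosDef) (hΘ : Θ.PosDef)
    (hΘt : Θ.trace = 1) :
    logdetObjective L η Θ = (1 / η) * ((η • (L + c • 1) * Θ).trace
      - Real.log (η • (L + c • 1) * Θ).det) - c + (1 / η) * Real.log (η • (L + c • 1)).det := by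
  have hP : (η • (L + c • 1)).det ≠ 0 := by
    rw [det_smul]
    exact mul_ne_zero (pow_ne_zero _ hη) hA.det_pos.ne'
  rw [logdetObjective, det_mul, Real.log_mul hP hΘ.det_pos.ne', smul_mul_assoc, trace_smul,
    add_mul, trace_add, smul_mul_assoc, trace_smul, one_mul, hΘt, smul_eq_mul, smul_eq_mul]
  field_simp
  ring

lemma logdetObjective_sub_logdetObjective_inv (hη : 0 < η) (hA : (L + c • 1).PosDef)
    (htr : ((L + c • 1)⁻¹).trace = η) (hΘ : Θ.PosDef) (hΘt : Θ.trace = 1) :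
    logdetObjective L η Θ - logdetObjective L η ((1 / η) • (L + c • 1)⁻¹) =
      (1 / η) * ((η • (L + c • 1) * Θ).trace - Fintype.card n
        - Real.log (η • (L + c • 1) * Θ).det) := by
  rw [logdetObjective_eq hη.ne' hA hΘ hΘt,
    logdetObjective_eq hη.ne' hA (hA.inv.smul (one_div_pos.mpr hη))
      (trace_one_div_smul_inv hη.ne' htr),
    smul_mul_one_div_smul_inv hη.ne' hA.det_pos.ne'.isUnit]
  simp only [trace_one, det_one, Real.log_one]
  ring

lemma logdetObjective_inv_le (hη : 0 < η) (hA : (L + c • 1).PosDef)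
    (htr : ((L + c • 1)⁻¹).trace = η) (hΘ : Θ.PosDef) (hΘt : Θ.trace = 1) :
    logdetObjective L η ((1 / η) • (L + c • 1)⁻¹) ≤ logdetObjective L η Θ := by
  have hgap := logdetObjective_sub_logdetObjective_inv hη hA htr hΘ hΘt
  have hle := (hA.smul hη).log_det_mul_le_trace_mul_sub_card hΘ
  have : 0 ≤ (1 / η) * ((η • (L + c • 1) * Θ).trace - Fintype.card n
      - Real.log (η • (L + c • 1) * Θ).det) :=
    mul_nonneg (one_div_pos.mpr hη).le (by linarith)
  linarith

lemma eq_inv_of_logdetObjective_le (hη : 0 < η) (hA : (L + c • 1).PosDef)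
    (htr : ((L + c • 1)⁻¹).trace = η) (hΘ : Θ.PosDef) (hΘt : Θ.trace = 1)
    (h : logdetObjective L η Θ ≤ logdetObjective L η ((1 / η) • (L + c • 1)⁻¹)) :
    Θ = (1 / η) • (L + c • 1)⁻¹ := by
  have hgap := logdetObjective_sub_logdetObjective_inv hη hA htr hΘ hΘt
  have hle := (hA.smul hη).log_det_mul_le_trace_mul_sub_card hΘ
  have hge : (η • (L + c • 1) * Θ).trace - Fintype.card n
      - Real.log (η • (L + c • 1) * Θ).det ≤ 0 :=
    nonpos_of_mul_nonpos_right (by linarith) (one_div_pos.mpr hη)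
  have hPΘ := (hA.smul hη).mul_eq_one_of_log_det_mul_eq hΘ (by linarith)
  exact (inv_eq_right_inv hPΘ).symm.trans
    (inv_eq_right_inv (smul_mul_one_div_smul_inv hη.ne' hA.det_pos.ne'.isUnit))

end LogdetObjective

/-- Optimality condition for the log-det regularized SDP: `Θ*` minimizes
`Tr(LΘ) - (1/η) log det Θ` over symmetric positive definite `Θ` with
`Tr Θ = 1` if and only if `Θ* = (1/η)(L + cI)⁻¹` for the unique scalar `c`
such that `L + cI` is positive definite and `Tr((L + cI)⁻¹) = η`. -/
theorem logdet_sdp_optimality {n : ℕ}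
    (L : Matrix (Fin n) (Fin n) ℝ) (hL : L.IsHermitian)
    (η : ℝ) (hη : 0 < η)
    (Θs : Matrix (Fin n) (Fin n) ℝ) (hΘs : Θs.PosDef) (hΘtr : Θs.trace = 1) :
    (∃! c : ℝ, (L + c • (1 : Matrix (Fin n) (Fin n) ℝ)).PosDef ∧
        ((L + c • (1 : Matrix (Fin n) (Fin n) ℝ))⁻¹).trace = η) ∧
    ((∀ Θ : Matrix (Fin n) (Fin n) ℝ, Θ.PosDef → Θ.trace = 1 →
        (L * Θs).trace - (1 / η) * Real.log Θs.det ≤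
          (L * Θ).trace - (1 / η) * Real.log Θ.det) ↔
      ∃ c : ℝ, (L + c • (1 : Matrix (Fin n) (Fin n) ℝ)).PosDef ∧
        ((L + c • (1 : Matrix (Fin n) (Fin n) ℝ))⁻¹).trace = η ∧
        Θs = (1 / η) • (L + c • (1 : Matrix (Fin n) (Fin n) ℝ))⁻¹) := by
  have : Nonempty (Fin n) := (isEmpty_or_nonempty _).resolve_left fun _ => by
    simp [trace_eq_zero_of_isEmpty] at hΘtr
  have hunique := hL.existsUnique_posDef_add_smul_one_trace_inv_eq hη
  refine ⟨hunique, fun hopt => ?_, ?_⟩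
  · obtain ⟨c, ⟨hA, htr⟩, -⟩ := hunique
    exact ⟨c, hA, htr, eq_inv_of_logdetObjective_le hη hA htr hΘs hΘtr
      (hopt _ (hA.inv.smul (one_div_pos.mpr hη)) (trace_one_div_smul_inv hη.ne' htr))⟩
  · rintro ⟨c, hA, htr, rfl⟩ Θ hΘ hΘt
    exact logdetObjective_inv_le hη hA htr hΘ hΘt
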